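/- For every a ∈ (0,1), the map f_a is a-Hölder on [0,1]: there exists a constant C > 0 such that |f_a(x) − f_a(y)| ≤ C·|x − y|^a for all x, y ∈ [0,1]. -/

import Mathlib

open Set MeasureTheory

/-- The piecewise-affine `b`-branched sawtooth map on `[0,1]`:
`g1 b x = b*x - k` on `[k/b,(k+1)/b]` for `k ∈ {0,…,b-1}` even, and
`g1 b x = (k+1) - b*x` there for `k` odd.  (For `x ∈ [0,1]`, the index
`k = min ⌊b*x⌋ (b-1)` is exactly the branch index; at common endpoints of two
branches both formulas agree, so this agrees with the piecewise definition.) -/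
noncomputable def g1 (b : ℕ) (x : ℝ) : ℝ :=
  let k : ℤ := min ⌊(b : ℝ) * x⌋ ((b : ℤ) - 1)
  if Even k then (b : ℝ) * x - (k : ℝ) else ((k : ℝ) + 1) - (b : ℝ) * x

def Eset : Set ℝ := {m | ∃ j : ℤ, Even j ∧ m = (j : ℝ)}

lemma Eset_nonempty : Eset.Nonempty := ⟨0, 0, Even.zero, by norm_num⟩

lemma kfacts (b : ℕ) (hb : 1 ≤ b) {x : ℝ} (hx : x ∈ Icc (0:ℝ) 1) :
    0 ≤ min ⌊(b : ℝ) * x⌋ ((b : ℤ) - 1) ∧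
    ((min ⌊(b : ℝ) * x⌋ ((b : ℤ) - 1) : ℤ) : ℝ) ≤ (b : ℝ) * x ∧
    (b : ℝ) * x ≤ ((min ⌊(b : ℝ) * x⌋ ((b : ℤ) - 1) : ℤ) : ℝ) + 1 := by
  obtain ⟨hx0, hx1⟩ := hx
  have hb1 : (1:ℝ) ≤ (b:ℝ) := by exact_mod_cast hb
  have ht0 : 0 ≤ (b:ℝ) * x := by positivity
  have htb : (b:ℝ) * x ≤ (b:ℝ) := by nlinarith
  have hfl0 : 0 ≤ ⌊(b : ℝ) * x⌋ := Int.le_floor.2 (by exact_mod_cast ht0)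
  refine ⟨le_min hfl0 (by omega), ?_, ?_⟩
  · calc ((min ⌊(b : ℝ) * x⌋ ((b : ℤ) - 1) : ℤ) : ℝ) ≤ ((⌊(b : ℝ) * x⌋ : ℤ) : ℝ) := by
          exact_mod_cast min_le_left _ _
      _ ≤ (b:ℝ) * x := Int.floor_le _
  · rcases le_or_gt ⌊(b : ℝ) * x⌋ ((b : ℤ) - 1) with h | h
    · rw [min_eq_left h]
      have := Int.lt_floor_add_one ((b:ℝ) * x)
      push_cast at this ⊢
      linarith
    · rw [min_eq_right h.le]
      push_cast
      linarith

lemma g1_eq_infDist (b : ℕ) (hb : 1 ≤ b) {x : ℝ} (hx : x ∈ Icc (0:ℝ) 1) :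
    g1 b x = Metric.infDist ((b : ℝ) * x) Eset := by
  obtain ⟨hk0, hkle, hlek⟩ := kfacts b hb hx
  set t : ℝ := (b : ℝ) * x with ht
  set k : ℤ := min ⌊(b : ℝ) * x⌋ ((b : ℤ) - 1) with hk
  have key : ∀ e : ℤ, Even e → (k:ℝ) ≤ (e:ℝ) ∨ (e:ℝ) ≤ (k:ℝ) := fun e _ => by
    rcases le_total (k:ℝ) (e:ℝ) with h | h
    · exact Or.inl h
    · exact Or.inr h
  -- the claimed value
  have main : g1 b x = Metric.infDist t Eset := by
    by_cases hev : Even k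
    · have hd : g1 b x = t - (k:ℝ) := by simp [g1, ← hk, hev, ht]
      rw [hd]
      refine le_antisymm ?_ ?_
      · -- ≥ : every even integer is at distance ≥ t - k
        refine le_of_not_gt fun hlt => ?_
        obtain ⟨y, ⟨j, hj, rfl⟩, hy⟩ := (Metric.infDist_lt_iff Eset_nonempty).1 hlt
        rw [Real.dist_eq] at hy
        rcases le_or_gt j k with h | h
        · have : (j:ℝ) ≤ (k:ℝ) := by exact_mod_cast h
          have : t - (j:ℝ) ≤ |t - j| := le_abs_self _
          linarith [le_abs_self (t - (j:ℝ))]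
        · have hj2 : k + 2 ≤ j := by
            obtain ⟨c, hc⟩ := hj; obtain ⟨d, hd'⟩ := hev; omega
          have : ((k:ℝ)) + 2 ≤ (j:ℝ) := by exact_mod_cast hj2
          have h1 : (j:ℝ) - t ≤ |t - (j:ℝ)| := by rw [abs_sub_comm]; exact le_abs_self _
          linarith
      · -- ≤ : k itself is even and in the set
        have := Metric.infDist_le_dist_of_mem (x := t) (show (k:ℝ) ∈ Eset from ⟨k, hev, rfl⟩)
        rw [Real.dist_eq, abs_of_nonneg (by linarith : (0:ℝ) ≤ t - k)] at this
        exact this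
    · have hd : g1 b x = (k:ℝ) + 1 - t := by
        simp only [g1, ← hk, if_neg hev, ht]
      rw [hd]
      refine le_antisymm ?_ ?_
      · refine le_of_not_gt fun hlt => ?_
        obtain ⟨y, ⟨j, hj, rfl⟩, hy⟩ := (Metric.infDist_lt_iff Eset_nonempty).1 hlt
        rw [Real.dist_eq] at hy
        rcases le_or_gt j k with h | h
        · have hj2 : j ≤ k - 1 := by
            rcases Int.even_or_odd k with hk' | hk'
            · exact absurd hk' hev
            · obtain ⟨c, hc⟩ := hj; obtain ⟨d, hd'⟩ := hk'; omega
          have : (j:ℝ) ≤ (k:ℝ) - 1 := by exact_mod_cast hj2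
          linarith [le_abs_self (t - (j:ℝ))]
        · have : ((k:ℝ)) + 1 ≤ (j:ℝ) := by exact_mod_cast h
          have h1 : (j:ℝ) - t ≤ |t - (j:ℝ)| := by rw [abs_sub_comm]; exact le_abs_self _
          linarith
      · have heven : Even (k + 1) := by
          rcases Int.even_or_odd k with hk' | hk'
          · exact absurd hk' hev
          · exact hk'.add_one
        have := Metric.infDist_le_dist_of_mem (x := t)
          (show ((k+1 : ℤ):ℝ) ∈ Eset from ⟨k+1, heven, rfl⟩)
        rw [Real.dist_eq] at this
        push_cast at this
        rw [abs_of_nonpos (by linarith : t - ((k:ℝ)+1) ≤ 0)] at this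
        linarith [this]
  exact main

lemma g1_mem (b : ℕ) (hb : 1 ≤ b) {x : ℝ} (hx : x ∈ Icc (0:ℝ) 1) :
    g1 b x ∈ Icc (0:ℝ) 1 := by
  obtain ⟨hk0, hkle, hlek⟩ := kfacts b hb hx
  set k : ℤ := min ⌊(b : ℝ) * x⌋ ((b : ℤ) - 1) with hk
  by_cases hev : Even k
  · simp only [g1, ← hk, if_pos hev]
    constructor <;> linarith
  · simp only [g1, ← hk, if_neg hev]
    constructor <;> linarith

lemma g1_lip (b : ℕ) (hb : 1 ≤ b) {x y : ℝ} (hx : x ∈ Icc (0:ℝ) 1) (hy : y ∈ Icc (0:ℝ) 1) :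
    |g1 b x - g1 b y| ≤ (b : ℝ) * |x - y| := by
  rw [g1_eq_infDist b hb hx, g1_eq_infDist b hb hy]
  have h1 := Metric.infDist_le_infDist_add_dist (x := (b:ℝ)*x) (y := (b:ℝ)*y) (s := Eset)
  have h2 := Metric.infDist_le_infDist_add_dist (x := (b:ℝ)*y) (y := (b:ℝ)*x) (s := Eset)
  rw [Real.dist_eq] at h1 h2
  rw [abs_sub_comm ((b:ℝ)*y) ((b:ℝ)*x)] at h2
  have : |(b:ℝ)*x - (b:ℝ)*y| = (b:ℝ) * |x - y| := by
    rw [← mul_sub, abs_mul, abs_of_nonneg (by positivity : (0:ℝ) ≤ (b:ℝ))]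
  rw [abs_sub_le_iff]
  constructor <;> linarith [this]

lemma g1_zero (b : ℕ) (hb : 1 ≤ b) : g1 b 0 = 0 := by
  have h0 : (0:ℤ) ⊓ ((b:ℤ)-1) = 0 := min_eq_left (by omega)
  simp [g1, h0]

lemma g1_one (b : ℕ) (hb : Odd b) : g1 b 1 = 1 := by
  have h1 : 1 ≤ b := hb.pos
  have : min ⌊(b : ℝ) * 1⌋ ((b : ℤ) - 1) = (b : ℤ) - 1 := by
    simp only [mul_one, Int.floor_natCast]
    omega
  have hev : Even ((b:ℤ) - 1) := by
    obtain ⟨c, hc⟩ := hb; subst hc; exact ⟨c, by push_cast; ring⟩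
  simp only [g1, this, if_pos hev]
  push_cast
  ring

lemma rpow_subadd {a : ℝ} (ha : 0 ≤ a) (ha1 : a ≤ 1) {u v : ℝ} (hu : 0 ≤ u) (hv : 0 ≤ v) :
    (u + v) ^ a ≤ u ^ a + v ^ a := by
  have h := NNReal.rpow_add_le_add_rpow (u.toNNReal) (v.toNNReal) ha ha1
  have h' := NNReal.coe_le_coe.2 h
  push_cast [NNReal.coe_rpow, Real.coe_toNNReal u hu, Real.coe_toNNReal v hv] at h'
  exact h'

lemma rpow_holder {a : ℝ} (ha : 0 < a) (ha1 : a ≤ 1) {x y : ℝ} (hx : 0 ≤ x) (hy : 0 ≤ y) :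
    |x ^ a - y ^ a| ≤ |x - y| ^ a := by
  wlog hxy : y ≤ x generalizing x y
  · rw [abs_sub_comm, abs_sub_comm x y]; exact this hy hx (le_of_not_ge hxy)
  have hxy0 : 0 ≤ x - y := by linarith
  have key : x ^ a ≤ (x - y) ^ a + y ^ a := by
    have := rpow_subadd ha.le ha1 hxy0 hy
    rwa [sub_add_cancel] at this
  have hmono : y ^ a ≤ x ^ a := Real.rpow_le_rpow hy hxy ha.le
  rw [abs_of_nonneg (by linarith), abs_of_nonneg hxy0]
  linarith

-- p-Lipschitz of x ↦ x^p on [0,1] for p ≥ 1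
lemma rpow_lip {p : ℝ} (hp : 1 ≤ p) {x y : ℝ} (hx : x ∈ Icc (0:ℝ) 1) (hy : y ∈ Icc (0:ℝ) 1) :
    |x ^ p - y ^ p| ≤ p * |x - y| := by
  have hderiv : ∀ z ∈ Icc (0:ℝ) 1,
      HasDerivWithinAt (fun t : ℝ => t ^ p) (p * z ^ (p - 1)) (Icc (0:ℝ) 1) z := by
    intro z _
    exact (Real.hasDerivAt_rpow_const (Or.inr hp)).hasDerivWithinAt
  have hbound : ∀ z ∈ Icc (0:ℝ) 1, ‖p * z ^ (p - 1)‖ ≤ p := by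
    intro z hz
    rw [Real.norm_eq_abs, abs_mul, abs_of_nonneg (by linarith : (0:ℝ) ≤ p),
      abs_of_nonneg (Real.rpow_nonneg hz.1 _)]
    have : z ^ (p - 1) ≤ 1 := Real.rpow_le_one hz.1 hz.2 (by linarith)
    nlinarith
  have := Convex.norm_image_sub_le_of_norm_hasDerivWithin_le hderiv hbound
    (convex_Icc 0 1) hy hx
  simpa [Real.norm_eq_abs] using this

/-- `g_{a,b} = q_a ∘ g_{1,b} ∘ q_a⁻¹`, where `q_a x = x ^ a` (real power). -/
noncomputable def gab (a : ℝ) (b : ℕ) (x : ℝ) : ℝ := (g1 b (x ^ a⁻¹)) ^ a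

lemma rpow_mem {a : ℝ} (ha : 0 ≤ a) {x : ℝ} (hx : x ∈ Icc (0:ℝ) 1) :
    x ^ a ∈ Icc (0:ℝ) 1 :=
  ⟨Real.rpow_nonneg hx.1 _, Real.rpow_le_one hx.1 hx.2 ha⟩

lemma gab_mem {a : ℝ} (ha : 0 < a) (b : ℕ) (hb : 1 ≤ b) {x : ℝ} (hx : x ∈ Icc (0:ℝ) 1) :
    gab a b x ∈ Icc (0:ℝ) 1 :=
  rpow_mem ha.le (g1_mem b hb (rpow_mem (by positivity) hx))

lemma gab_zero {a : ℝ} (ha : 0 < a) (b : ℕ) (hb : 1 ≤ b) : gab a b 0 = 0 := by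
  rw [gab, Real.zero_rpow (inv_ne_zero ha.ne'), g1_zero b hb,
    Real.zero_rpow ha.ne']

lemma gab_one {a : ℝ} (ha : 0 < a) (b : ℕ) (hb : Odd b) : gab a b 1 = 1 := by
  rw [gab, Real.one_rpow, g1_one b hb, Real.one_rpow]

lemma gab_holder {a : ℝ} (ha : 0 < a) (ha1 : a ≤ 1) (b : ℕ) (hb : 1 ≤ b)
    {x y : ℝ} (hx : x ∈ Icc (0:ℝ) 1) (hy : y ∈ Icc (0:ℝ) 1) :
    |gab a b x - gab a b y| ≤ ((b : ℝ) * a⁻¹) * |x - y| ^ a := by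
  have hp : 1 ≤ a⁻¹ := one_le_inv_iff₀.2 ⟨ha, ha1⟩
  have hb1 : (1:ℝ) ≤ (b:ℝ) := by exact_mod_cast hb
  set u := x ^ a⁻¹ with hu
  set v := y ^ a⁻¹ with hv
  have hum : u ∈ Icc (0:ℝ) 1 := rpow_mem (by positivity) hx
  have hvm : v ∈ Icc (0:ℝ) 1 := rpow_mem (by positivity) hy
  have h1 : |g1 b u - g1 b v| ≤ (b : ℝ) * (a⁻¹ * |x - y|) := by
    calc |g1 b u - g1 b v| ≤ (b : ℝ) * |u - v| := g1_lip b hb hum hvm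
      _ ≤ (b : ℝ) * (a⁻¹ * |x - y|) := by
          have := rpow_lip hp hx hy
          have hb0 : (0:ℝ) ≤ (b:ℝ) := by positivity
          exact mul_le_mul_of_nonneg_left this hb0
  have hg1u := g1_mem b hb hum
  have hg1v := g1_mem b hb hvm
  have h2 : |gab a b x - gab a b y| ≤ |g1 b u - g1 b v| ^ a := by
    rw [gab, gab, ← hu, ← hv]
    exact rpow_holder ha ha1 hg1u.1 hg1v.1
  have h3 : |g1 b u - g1 b v| ^ a ≤ ((b : ℝ) * (a⁻¹ * |x - y|)) ^ a :=
    Real.rpow_le_rpow (abs_nonneg _) h1 ha.le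
  have h4 : ((b : ℝ) * (a⁻¹ * |x - y|)) ^ a = ((b : ℝ) * a⁻¹) ^ a * |x - y| ^ a := by
    rw [← mul_assoc, Real.mul_rpow (by positivity) (abs_nonneg _)]
  have h5 : ((b : ℝ) * a⁻¹) ^ a ≤ (b : ℝ) * a⁻¹ := by
    have hba : (1:ℝ) ≤ (b : ℝ) * a⁻¹ := by nlinarith
    calc ((b : ℝ) * a⁻¹) ^ a ≤ ((b : ℝ) * a⁻¹) ^ (1:ℝ) :=
          Real.rpow_le_rpow_of_exponent_le hba ha1
      _ = (b : ℝ) * a⁻¹ := Real.rpow_one _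
  calc |gab a b x - gab a b y| ≤ ((b : ℝ) * a⁻¹) ^ a * |x - y| ^ a := by
        rw [← h4]; exact h2.trans h3
    _ ≤ ((b : ℝ) * a⁻¹) * |x - y| ^ a :=
        mul_le_mul_of_nonneg_right h5 (Real.rpow_nonneg (abs_nonneg _) _)

/-- For `x ∈ I_n = (2^{-n}, 2^{-n+1}]` (with `n ≥ 1`), `nIdx x = n`. -/
noncomputable def nIdx (x : ℝ) : ℕ := (⌊Real.logb 2 x⁻¹⌋ + 1).toNat

/-- The map `f_a : [0,1] → [0,1]`: on each interval `I_n = (2^{-n}, 2^{-n+1}]` it is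
`A_n⁻¹ ∘ g_{a,2n+1} ∘ A_n`, where `A_n x = 2^n x - 1`, and `f_a 0 = 0`. -/
noncomputable def fa (a : ℝ) (x : ℝ) : ℝ :=
  if x ≤ 0 then 0
  else (gab a (2 * nIdx x + 1) ((2 : ℝ) ^ nIdx x * x - 1) + 1) / (2 : ℝ) ^ nIdx x

noncomputable def Fn (a : ℝ) (n : ℕ) (x : ℝ) : ℝ :=
  (gab a (2 * n + 1) ((2 : ℝ) ^ n * x - 1) + 1) / (2 : ℝ) ^ n

lemma fa_eq (a : ℝ) {x : ℝ} (hx : 0 < x) : fa a x = Fn a (nIdx x) x := by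
  rw [fa, if_neg (not_le.2 hx)]; rfl

lemma nIdx_spec {x : ℝ} (hx0 : 0 < x) (hx1 : x ≤ 1) :
    1 ≤ nIdx x ∧ 1 < (2:ℝ) ^ (nIdx x) * x ∧ (2:ℝ) ^ (nIdx x) * x ≤ 2 := by
  set L := Real.logb 2 x⁻¹ with hL
  have hxinv1 : 1 ≤ x⁻¹ := one_le_inv_iff₀.2 ⟨hx0, hx1⟩
  have hL0 : 0 ≤ L := Real.logb_nonneg (by norm_num) hxinv1
  have hfl0 : 0 ≤ ⌊L⌋ := Int.le_floor.2 (by exact_mod_cast hL0)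
  have hn : ((nIdx x : ℕ) : ℤ) = ⌊L⌋ + 1 := by
    rw [nIdx, ← hL, Int.toNat_of_nonneg (by omega)]
  have hn1 : 1 ≤ nIdx x := by omega
  have hxL : (2:ℝ) ^ L = x⁻¹ := Real.rpow_logb (by norm_num) (by norm_num) (inv_pos.2 hx0)
  have hnR : ((nIdx x : ℕ) : ℝ) = (⌊L⌋ : ℝ) + 1 := by exact_mod_cast hn
  have hpow : (2:ℝ) ^ ((nIdx x : ℕ) : ℝ) = (2:ℝ) ^ (nIdx x) := Real.rpow_natCast 2 _
  have hup : x⁻¹ < (2:ℝ) ^ (nIdx x) := by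
    rw [← hpow, hnR, ← hxL]
    exact Real.rpow_lt_rpow_of_exponent_lt (by norm_num) (by linarith [Int.lt_floor_add_one L])
  have hlow : (2:ℝ) ^ (nIdx x) ≤ 2 * x⁻¹ := by
    have h1 : (2:ℝ) ^ ((⌊L⌋ : ℝ)) ≤ x⁻¹ := by
      rw [← hxL]
      exact Real.rpow_le_rpow_of_exponent_le (by norm_num) (Int.floor_le L)
    have h2 : (2:ℝ) ^ ((nIdx x : ℕ) : ℝ) = 2 * (2:ℝ) ^ ((⌊L⌋ : ℝ)) := by
      rw [hnR, Real.rpow_add (by norm_num), Real.rpow_one]; ring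
    rw [← hpow, h2]
    linarith
  have hxpos : (0:ℝ) < x := hx0
  have hinv : x⁻¹ * x = 1 := inv_mul_cancel₀ hx0.ne'
  refine ⟨hn1, ?_, ?_⟩
  · nlinarith
  · nlinarith

lemma Fn_mem {a : ℝ} (ha : 0 < a) (n : ℕ) {x : ℝ}
    (hx : (2:ℝ) ^ n * x - 1 ∈ Icc (0:ℝ) 1) :
    Fn a n x ∈ Icc (((2:ℝ)^n)⁻¹) (2 * ((2:ℝ)^n)⁻¹) := by
  have h2n : (0:ℝ) < (2:ℝ)^n := by positivity
  have hg := gab_mem ha (2*n+1) (by omega) hx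
  rw [Fn]
  constructor
  · rw [inv_eq_one_div, div_le_div_iff₀ h2n h2n]
    nlinarith [hg.1]
  · rw [div_le_iff₀ h2n]
    have : 2 * ((2:ℝ)^n)⁻¹ * (2:ℝ)^n = 2 := by field_simp
    rw [this]
    linarith [hg.2]

lemma Fn_left {a : ℝ} (ha : 0 < a) (n : ℕ) : Fn a n (((2:ℝ)^n)⁻¹) = ((2:ℝ)^n)⁻¹ := by
  have h2n : ((2:ℝ)^n) ≠ 0 := by positivity
  have harg : (2:ℝ) ^ n * ((2:ℝ)^n)⁻¹ - 1 = 0 := by field_simp; ring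
  rw [Fn, harg, gab_zero ha (2*n+1) (by omega)]
  field_simp
  ring

lemma Fn_right {a : ℝ} (ha : 0 < a) (n : ℕ) :
    Fn a n (2 * ((2:ℝ)^n)⁻¹) = 2 * ((2:ℝ)^n)⁻¹ := by
  have h2n : ((2:ℝ)^n) ≠ 0 := by positivity
  have harg : (2:ℝ) ^ n * (2 * ((2:ℝ)^n)⁻¹) - 1 = 1 := by field_simp; ring
  rw [Fn, harg, gab_one ha (2*n+1) ⟨n, by omega⟩]
  field_simp
  ring

lemma Fn_holder {a : ℝ} (ha : 0 < a) (ha1 : a ≤ 1) {M : ℝ}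
    (hM : ∀ n : ℕ, (2 * (n:ℝ) + 1) * ((2:ℝ) ^ (a - 1 : ℝ))^n ≤ M) (n : ℕ) {x y : ℝ}
    (hx : (2:ℝ) ^ n * x - 1 ∈ Icc (0:ℝ) 1) (hy : (2:ℝ) ^ n * y - 1 ∈ Icc (0:ℝ) 1) :
    |Fn a n x - Fn a n y| ≤ (M * a⁻¹) * |x - y| ^ a := by
  have h2n : (0:ℝ) < (2:ℝ)^n := by positivity
  have hgab := gab_holder ha ha1 (2*n+1) (by omega) hx hy
  have hdiff : Fn a n x - Fn a n y =
      (gab a (2*n+1) ((2:ℝ)^n * x - 1) - gab a (2*n+1) ((2:ℝ)^n * y - 1)) / (2:ℝ)^n := by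
    rw [Fn, Fn]; ring
  have hargdiff : |((2:ℝ)^n * x - 1) - ((2:ℝ)^n * y - 1)| = (2:ℝ)^n * |x - y| := by
    rw [show ((2:ℝ)^n * x - 1) - ((2:ℝ)^n * y - 1) = (2:ℝ)^n * (x - y) by ring,
      abs_mul, abs_of_pos h2n]
  rw [hargdiff] at hgab
  have hb : ((2*n+1 : ℕ) : ℝ) = 2 * (n:ℝ) + 1 := by push_cast; ring
  -- the exponent computation: (2^n)^a / 2^n = (2^(a-1))^n
  have hexp : ((2:ℝ)^n) ^ (a:ℝ) / (2:ℝ)^n = ((2:ℝ) ^ (a - 1 : ℝ))^n := by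
    have e1 : ((2:ℝ)^n : ℝ) = (2:ℝ) ^ ((n:ℕ) : ℝ) := (Real.rpow_natCast 2 n).symm
    have e2 : ((2:ℝ) ^ (a - 1 : ℝ))^n = (2:ℝ) ^ ((a - 1) * (n:ℝ)) := by
      rw [← Real.rpow_natCast ((2:ℝ) ^ (a - 1 : ℝ)) n, ← Real.rpow_mul (by norm_num)]
    rw [e1, ← Real.rpow_mul (by norm_num), e2, ← Real.rpow_sub (by norm_num)]
    ring_nf
  calc |Fn a n x - Fn a n y|
      = |gab a (2*n+1) ((2:ℝ)^n * x - 1) - gab a (2*n+1) ((2:ℝ)^n * y - 1)| / (2:ℝ)^n := by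
        rw [hdiff, abs_div, abs_of_pos h2n]
    _ ≤ (((2*n+1 : ℕ) : ℝ) * a⁻¹) * ((2:ℝ)^n * |x - y|) ^ a / (2:ℝ)^n := by
        gcongr
    _ = ((2 * (n:ℝ) + 1) * ((2:ℝ) ^ (a - 1 : ℝ))^n) * a⁻¹ * |x - y| ^ a := by
        rw [Real.mul_rpow h2n.le (abs_nonneg _), hb, ← hexp]
        ring
    _ ≤ (M * a⁻¹) * |x - y| ^ a := by
        have h1 : 0 ≤ a⁻¹ := by positivity
        have h2 : 0 ≤ |x - y| ^ a := Real.rpow_nonneg (abs_nonneg _) _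
        have := hM n
        nlinarith [this, h1, h2, mul_le_mul_of_nonneg_right
          (mul_le_mul_of_nonneg_right this h1) h2]

lemma geom_bound {r : ℝ} (hr0 : 0 ≤ r) (hr1 : r < 1) :
    ∃ M : ℝ, 1 ≤ M ∧ ∀ n : ℕ, (2 * (n:ℝ) + 1) * r ^ n ≤ M := by
  have hsum : Summable (fun n : ℕ => ((n:ℝ)) ^ 1 * r ^ n) :=
    summable_pow_mul_geometric_of_norm_lt_one 1 (by rwa [Real.norm_eq_abs, abs_of_nonneg hr0])
  have hsum2 : Summable (fun n : ℕ => r ^ n) := summable_geometric_of_lt_one hr0 hr1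
  have hsum3 : Summable (fun n : ℕ => (2 * (n:ℝ) + 1) * r ^ n) := by
    have := (hsum.mul_left 2).add hsum2
    convert this using 2 with n
    case e'_5 => ring
    rfl
  have htend := hsum3.tendsto_atTop_zero
  have hbdd : BddAbove (Set.range fun n : ℕ => (2 * (n:ℝ) + 1) * r ^ n) :=
    htend.bddAbove_range
  obtain ⟨M0, hM0⟩ := hbdd
  refine ⟨max M0 1, le_max_right _ _, fun n => ?_⟩
  exact le_trans (hM0 (Set.mem_range_self n)) (le_max_left _ _)

/-- For every `a ∈ (0,1)`, the map `f_a` is `a`-Hölder on `[0,1]`. -/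
theorem fa_holder (a : ℝ) (ha : a ∈ Set.Ioo (0 : ℝ) 1) :
    ∃ C > (0 : ℝ), ∀ x ∈ Set.Icc (0 : ℝ) 1, ∀ y ∈ Set.Icc (0 : ℝ) 1,
      |fa a x - fa a y| ≤ C * |x - y| ^ a := by
  obtain ⟨ha0, ha1⟩ := ha
  have hr0 : (0:ℝ) ≤ (2:ℝ) ^ (a - 1 : ℝ) := (Real.rpow_pos_of_pos two_pos _).le
  have hr1 : (2:ℝ) ^ (a - 1 : ℝ) < 1 :=
    Real.rpow_lt_one_of_one_lt_of_neg (by norm_num) (by linarith)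
  obtain ⟨M, hM1, hM⟩ := geom_bound hr0 hr1
  have hainv : 1 ≤ a⁻¹ := one_le_inv_iff₀.2 ⟨ha0, ha1.le⟩
  set K : ℝ := M * a⁻¹ with hKdef
  have hK1 : 1 ≤ K := by
    calc (1:ℝ) = 1 * 1 := by norm_num
      _ ≤ M * a⁻¹ := mul_le_mul hM1 hainv (by norm_num) (by linarith)
  have self_le : ∀ t : ℝ, 0 < t → t ≤ 1 → t ≤ t ^ a := by
    intro t ht ht1
    have := Real.rpow_le_rpow_of_exponent_ge ht ht1 ha1.le
    rwa [Real.rpow_one] at this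
  refine ⟨2 * K + 3, by linarith, ?_⟩
  have key : ∀ x y : ℝ, 0 ≤ y → y ≤ x → x ≤ 1 →
      |fa a x - fa a y| ≤ (2 * K + 3) * |x - y| ^ a := by
    intro x y hy0 hyx hx1
    have hrpow0 : (0:ℝ) ≤ |x - y| ^ a := Real.rpow_nonneg (abs_nonneg _) _
    by_cases hx0 : x ≤ 0
    · have hy' : y ≤ 0 := le_trans hyx hx0
      rw [fa, fa, if_pos hx0, if_pos hy']
      simp only [sub_zero, abs_zero]
      positivity
    push_neg at hx0
    set n := nIdx x with hn
    obtain ⟨hn1, hxl, hxu⟩ := nIdx_spec hx0 hx1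
    have h2n : (0:ℝ) < (2:ℝ)^n := by positivity
    have h2ninv : ((2:ℝ)^n)⁻¹ * (2:ℝ)^n = 1 := inv_mul_cancel₀ h2n.ne'
    have hxmem : (2:ℝ)^n * x - 1 ∈ Icc (0:ℝ) 1 := ⟨by linarith, by linarith⟩
    have hfx : fa a x = Fn a n x := fa_eq a hx0
    have hxlow : ((2:ℝ)^n)⁻¹ < x := by
      rw [inv_eq_one_div, div_lt_iff₀ h2n]; linarith
    have hxhigh : x ≤ 2 * ((2:ℝ)^n)⁻¹ := by
      rw [inv_eq_one_div, mul_one_div, le_div_iff₀ h2n]; linarith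
    by_cases hy' : y ≤ 0
    · -- y = 0 case
      have hyy : y = 0 := le_antisymm hy' hy0
      subst hyy
      have hfy0 : fa a 0 = 0 := by rw [fa]; simp
      have hmem := Fn_mem ha0 n hxmem
      have hFpos : 0 < Fn a n x := lt_of_lt_of_le (by positivity) hmem.1
      rw [hfy0, hfx, sub_zero, sub_zero, abs_of_pos hFpos, abs_of_pos hx0]
      have h1 : Fn a n x ≤ 2 * x := le_trans hmem.2 (by linarith)
      have h2 : x ≤ x ^ a := self_le x hx0 hx1
      have hxa0 : 0 ≤ x ^ a := Real.rpow_nonneg hx0.le a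
      nlinarith [mul_nonneg (by linarith : (0:ℝ) ≤ 2 * K + 1) hxa0]
    push_neg at hy'
    have hy1 : y ≤ 1 := le_trans hyx hx1
    set m := nIdx y with hm
    obtain ⟨hm1, hyl, hyu⟩ := nIdx_spec hy' hy1
    have h2m : (0:ℝ) < (2:ℝ)^m := by positivity
    have h2minv : ((2:ℝ)^m)⁻¹ * (2:ℝ)^m = 1 := inv_mul_cancel₀ h2m.ne'
    have hymem : (2:ℝ)^m * y - 1 ∈ Icc (0:ℝ) 1 := ⟨by linarith, by linarith⟩
    have hfy : fa a y = Fn a m y := fa_eq a hy'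
    have hylow : ((2:ℝ)^m)⁻¹ < y := by
      rw [inv_eq_one_div, div_lt_iff₀ h2m]; linarith
    have hyhigh : y ≤ 2 * ((2:ℝ)^m)⁻¹ := by
      rw [inv_eq_one_div, mul_one_div, le_div_iff₀ h2m]; linarith
    have hnm : n ≤ m := by
      by_contra hcon
      push_neg at hcon
      have hpow : (2:ℝ)^(m+1) ≤ (2:ℝ)^n := pow_le_pow_right₀ (by norm_num) (by omega)
      have : 2 * ((2:ℝ)^n)⁻¹ ≤ ((2:ℝ)^m)⁻¹ := by
        rw [inv_eq_one_div, inv_eq_one_div, mul_one_div, div_le_div_iff₀ h2n h2m]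
        rw [pow_succ] at hpow
        linarith
      linarith
    rcases eq_or_lt_of_le hnm with heq | hlt
    · -- same interval
      have hymem' : (2:ℝ)^n * y - 1 ∈ Icc (0:ℝ) 1 := by rw [heq]; exact hymem
      have hfy' : fa a y = Fn a n y := by rw [hfy, heq]
      rw [hfx, hfy']
      have := Fn_holder ha0 ha1.le hM n hxmem hymem'
      calc |Fn a n x - Fn a n y| ≤ K * |x - y| ^ a := this
        _ ≤ (2 * K + 3) * |x - y| ^ a :=
            mul_le_mul_of_nonneg_right (by linarith) hrpow0
    · -- different intervals: chain through the endpoints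
      have hm1n : n + 1 ≤ m := hlt
      set p : ℝ := ((2:ℝ)^n)⁻¹ with hp
      set q : ℝ := 2 * ((2:ℝ)^m)⁻¹ with hq
      have hqp : q ≤ p := by
        rw [hp, hq, inv_eq_one_div, inv_eq_one_div, mul_one_div, div_le_div_iff₀ h2m h2n]
        have hpow : (2:ℝ)^(n+1) ≤ (2:ℝ)^m := pow_le_pow_right₀ (by norm_num) (by omega)
        rw [pow_succ] at hpow
        linarith
      have hyq : y ≤ q := hyhigh
      have hpx : p < x := hxlow
      have hxy : 0 < x - y := by linarith
      have hxy1 : x - y ≤ 1 := by linarith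
      have hpmem : (2:ℝ)^n * p - 1 ∈ Icc (0:ℝ) 1 := by
        rw [hp]
        constructor <;> rw [mul_inv_cancel₀ h2n.ne'] <;> norm_num
      have hqmem : (2:ℝ)^m * q - 1 ∈ Icc (0:ℝ) 1 := by
        rw [hq]
        have : (2:ℝ)^m * (2 * ((2:ℝ)^m)⁻¹) = 2 := by field_simp
        rw [this]
        norm_num
      have hK0 : (0:ℝ) ≤ K := by linarith
      have e1 : |Fn a n x - Fn a n p| ≤ K * |x - p| ^ a := Fn_holder ha0 ha1.le hM n hxmem hpmem
      have e2 : |Fn a m q - Fn a m y| ≤ K * |q - y| ^ a := Fn_holder ha0 ha1.le hM m hqmem hymem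
      have hFp : Fn a n p = p := Fn_left ha0 n
      have hFq : Fn a m q = q := Fn_right ha0 m
      have habs1 : |x - p| ≤ |x - y| := by
        rw [abs_of_pos (by linarith : (0:ℝ) < x - p), abs_of_pos hxy]; linarith
      have habs2 : |q - y| ≤ |x - y| := by
        rw [abs_of_nonneg (by linarith : (0:ℝ) ≤ q - y), abs_of_pos hxy]; linarith
      have hr1' : |x - p| ^ a ≤ |x - y| ^ a := Real.rpow_le_rpow (abs_nonneg _) habs1 ha0.le
      have hr2' : |q - y| ^ a ≤ |x - y| ^ a := Real.rpow_le_rpow (abs_nonneg _) habs2 ha0.le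
      have hmid : p - q ≤ |x - y| ^ a := by
        have h1 : p - q ≤ x - y := by linarith
        have h2 : x - y ≤ (x - y) ^ a := self_le _ hxy hxy1
        rw [abs_of_pos hxy]
        linarith
      have htri : |fa a x - fa a y| ≤ |Fn a n x - Fn a n p| + (p - q) + |Fn a m q - Fn a m y| := by
        rw [hfx, hfy]
        have : Fn a n x - Fn a m y = (Fn a n x - Fn a n p) + (p - q) + (Fn a m q - Fn a m y) := by
          rw [hFp, hFq]; ring
        rw [this]
        calc |(Fn a n x - Fn a n p) + (p - q) + (Fn a m q - Fn a m y)|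
            ≤ |(Fn a n x - Fn a n p) + (p - q)| + |Fn a m q - Fn a m y| := abs_add_le _ _
          _ ≤ |Fn a n x - Fn a n p| + |p - q| + |Fn a m q - Fn a m y| := by
              have := abs_add_le (Fn a n x - Fn a n p) (p - q)
              linarith
          _ = |Fn a n x - Fn a n p| + (p - q) + |Fn a m q - Fn a m y| := by
              rw [abs_of_nonneg (by linarith : (0:ℝ) ≤ p - q)]
      calc |fa a x - fa a y| ≤ |Fn a n x - Fn a n p| + (p - q) + |Fn a m q - Fn a m y| := htri
        _ ≤ K * |x - y| ^ a + |x - y| ^ a + K * |x - y| ^ a := by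
            have b1 : |Fn a n x - Fn a n p| ≤ K * |x - y| ^ a :=
              e1.trans (mul_le_mul_of_nonneg_left hr1' hK0)
            have b2 : |Fn a m q - Fn a m y| ≤ K * |x - y| ^ a :=
              e2.trans (mul_le_mul_of_nonneg_left hr2' hK0)
            linarith
        _ ≤ (2 * K + 3) * |x - y| ^ a := by
            have expand : (2 * K + 3) * |x - y| ^ a =
                K * |x - y| ^ a + |x - y| ^ a + K * |x - y| ^ a + 2 * |x - y| ^ a := by ring
            rw [expand]
            linarith
  intro x hx y hy
  rcases le_total y x with h | h
  · exact key x y hy.1 h hx.2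
  · rw [abs_sub_comm (fa a x), abs_sub_comm x y]
    exact key y x hx.1 h hy.2
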